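/- arXiv:1806.08356 — 7 statements merged into one kernel-verified Lean document; each statement's English description precedes it below -/
import Mathlib

section
/- (Proposition 1) Let m ∈ F be a nonisotropic cycle with ⟨m, p⟩ = 0 which has a zero point in E, i.e., there exists u ∈ E with ⟨m, q(u)⟩ = 0. Then ⟨m, m⟩ > 0, and the set {u ∈ H : ⟨m, q(u)⟩ = 0} of zero points of m in H is infinite. -/
/-!
For `m = (a, b, c)` one has `⟨m, m⟩ = B(2au + b, 2au + b) + 2a⟨m, q(u)⟩`, so at a zero point `u`
the norm `⟨m, m⟩` is a square length, hence positive. If `a ≠ 0` the zero points form the circle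
of squared radius `⟨m, m⟩ / (2a)²` around `−b / (2a)`; if `a = 0` they form the line
`B(b, u) = −c`. Orthogonality to `p` means `B(b, i) = 0`: the centre lies on the boundary of `H`,
resp. the line is parallel to `i`. Either way the coordinate `B(i, u)` parametrizes infinitely
many zero points in `H`.
-/

variable {K : Type*} [Field K] [LinearOrder K] [IsStrictOrderedRing K]
variable {E : Type*} [AddCommGroup E] [Module K E]

/-- The cycle pairing on the space of cycles `F = K × E × K`:
`⟨(a,b,c),(a',b',c')⟩ = B(b,b') − 2ac' − 2a'c`. -/
def cyc (B : LinearMap.BilinForm K E) (f g : K × E × K) : K :=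
  B f.2.1 g.2.1 - 2 * f.1 * g.2.2 - 2 * g.1 * f.2.2

/-- The normalized zero circle centered at `u`: the cycle `(1, −2u, B(u,u))`. -/
def qc (B : LinearMap.BilinForm K E) (u : E) : K × E × K :=
  (1, (-2 : K) • u, B u u)

open Set

section

variable (B : LinearMap.BilinForm K E)

omit [LinearOrder K] [IsStrictOrderedRing K] in
theorem cyc_qc (m : K × E × K) (u : E) :
    cyc B m (qc B u) = -2 * B m.2.1 u - 2 * m.1 * B u u - 2 * m.2.2 := by
  simp only [cyc, qc, map_smul, smul_eq_mul]
  ring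

omit [LinearOrder K] [IsStrictOrderedRing K] in
theorem cyc_self (m : K × E × K) : cyc B m m = B m.2.1 m.2.1 - 4 * m.1 * m.2.2 := by
  simp only [cyc]
  ring

variable {B}

omit [LinearOrder K] [IsStrictOrderedRing K] in
theorem cyc_self_eq_add_cyc_qc (hsymm : ∀ x y : E, B x y = B y x) (m : K × E × K) (u : E) :
    cyc B m m =
      B ((2 * m.1) • u + m.2.1) ((2 * m.1) • u + m.2.1) + 2 * m.1 * cyc B m (qc B u) := by
  simp only [cyc_self, cyc_qc, map_add, map_smul, LinearMap.add_apply, LinearMap.smul_apply,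
    smul_eq_mul, hsymm u m.2.1]
  ring

omit [IsStrictOrderedRing K] in
theorem cyc_self_pos_of_cyc_qc_eq_zero (hsymm : ∀ x y : E, B x y = B y x)
    (hpos : ∀ x : E, x ≠ 0 → 0 < B x x) {m : K × E × K} (hm : cyc B m m ≠ 0) {u : E}
    (hu : cyc B m (qc B u) = 0) : 0 < cyc B m m := by
  refine lt_of_le_of_ne ?_ hm.symm
  rw [cyc_self_eq_add_cyc_qc hsymm m u, hu, mul_zero, add_zero]
  set v := (2 * m.1) • u + m.2.1
  rcases eq_or_ne v 0 with hv | hv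
  · simp [hv]
  · exact (hpos v hv).le

theorem cyc_qc_eq_zero_iff (hsymm : ∀ x y : E, B x y = B y x) {m : K × E × K} (ha : m.1 ≠ 0)
    (u : E) :
    cyc B m (qc B u) = 0 ↔
      B (u - (-(2 * m.1)⁻¹) • m.2.1) (u - (-(2 * m.1)⁻¹) • m.2.1) =
        cyc B m m / (2 * m.1) ^ 2 := by
  have h2a : 2 * m.1 ≠ 0 := mul_ne_zero two_ne_zero ha
  have hscale : (2 * m.1) • u + m.2.1 = (2 * m.1) • (u - (-(2 * m.1)⁻¹) • m.2.1) := by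
    rw [smul_sub, smul_smul, mul_neg, mul_inv_cancel₀ h2a, neg_smul, one_smul, sub_neg_eq_add]
  rw [cyc_self_eq_add_cyc_qc hsymm m u, hscale, eq_div_iff (pow_ne_zero 2 h2a)]
  simp only [map_smul, LinearMap.smul_apply, smul_eq_mul]
  constructor
  · intro h; rw [h]; ring
  · intro h
    have : 2 * m.1 * cyc B m (qc B u) = 0 := by linear_combination -h
    exact (mul_eq_zero.1 this).resolve_left h2a

omit [IsStrictOrderedRing K] in
theorem exists_orthogonal_unit (heuc : ∀ x : K, 0 ≤ x → ∃ y : K, y * y = x)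
    (hpos : ∀ x : E, x ≠ 0 → 0 < B x x) (hdim : 1 < Module.finrank K E) (i : E) :
    ∃ j : E, B i j = 0 ∧ B j j = 1 := by
  have : FiniteDimensional K E := Module.finite_of_finrank_pos (by omega)
  have hker : Module.finrank K (LinearMap.ker (B i)) ≠ 0 := by
    have hrange := Submodule.finrank_le (LinearMap.range (B i))
    have := LinearMap.finrank_range_add_finrank_ker (B i)
    rw [Module.finrank_self] at hrange
    omega
  obtain ⟨j₀, hj₀, hj₀ne⟩ :=
    Submodule.exists_mem_ne_zero_of_ne_bot (mt Submodule.finrank_eq_zero.2 hker)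
  obtain ⟨s, hs⟩ := heuc _ (hpos j₀ hj₀ne).le
  have hs0 : s ≠ 0 := by
    rintro rfl
    exact (hpos j₀ hj₀ne).ne (by simpa using hs)
  refine ⟨s⁻¹ • j₀, by simp [LinearMap.mem_ker.1 hj₀], ?_⟩
  simp only [map_smul, LinearMap.smul_apply, smul_eq_mul, ← hs]
  field_simp

theorem infinite_halfPlane_inter_line (hsymm : ∀ x y : E, B x y = B y x) {i b : E}
    (hi : B i i = 1) (hb : B b b ≠ 0) (hbi : B b i = 0) (c : K) :
    {u | B i u < 0 ∧ B b u = c}.Infinite := by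
  set f : K → E := fun t => (c / B b b) • b + t • i
  have hBif : ∀ t, B i (f t) = t := fun t => by simp [f, hsymm i b, hbi, hi]
  have hmaps : MapsTo f (Iio 0) {u | B i u < 0 ∧ B b u = c} := fun t ht =>
    ⟨by rwa [hBif], by simp [f, hbi, hb]⟩
  exact ((Iio_infinite 0).image
    (Function.LeftInverse.injective hBif).injOn).mono hmaps.image_subset

theorem infinite_halfPlane_inter_circle (heuc : ∀ x : K, 0 ≤ x → ∃ y : K, y * y = x)
    (hsymm : ∀ x y : E, B x y = B y x) {i j : E} (hi : B i i = 1) (hij : B i j = 0)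
    (hj : B j j = 1) {w : E} (hw : B i w = 0) {ρ : K} (hρ : 0 < ρ) :
    {u | B i u < 0 ∧ B (u - w) (u - w) = ρ}.Infinite := by
  obtain ⟨r, hr⟩ := heuc ρ hρ.le
  choose y hy using fun x : K => heuc (max (ρ - x * x) 0) (le_max_right _ _)
  set f : K → E := fun x => w + x • i + y x • j
  have hBif : ∀ x, B i (f x) = x := fun x => by simp [f, hw, hi, hij]
  have hmaps : MapsTo f (Ioo (-|r|) 0) {u | B i u < 0 ∧ B (u - w) (u - w) = ρ} := by
    intro x hx
    refine ⟨by rw [hBif]; exact hx.2, ?_⟩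
    have hxx : x * x < ρ := by
      rw [← hr, ← abs_mul_abs_self r, ← abs_mul_abs_self x]
      exact mul_self_lt_mul_self (abs_nonneg x) (by rw [abs_of_neg hx.2]; linarith [hx.1])
    have hyy : y x * y x = ρ - x * x := by rw [hy, max_eq_left (by linarith)]
    have hfx : f x - w = x • i + y x • j := by simp only [f]; abel
    simp only [hfx, map_add, map_smul, LinearMap.add_apply, LinearMap.smul_apply, smul_eq_mul,
      hi, hij, hj, hsymm j i]
    linear_combination hyy
  have hr0 : 0 < |r| := abs_pos.2 (by rintro rfl; exact hρ.ne (by simpa using hr))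
  exact ((Ioo_infinite (by linarith)).image
    (Function.LeftInverse.injective hBif).injOn).mono hmaps.image_subset

end

/-- Proposition 1: a nonisotropic cycle orthogonal to `p` having a zero point in `E`
has positive norm and infinitely many zero points in the half-plane `H`. -/
theorem prop1_pos_norm_and_infinite_zero_points
    (B : LinearMap.BilinForm K E)
    (heuc : ∀ x : K, 0 ≤ x → ∃ y : K, y * y = x)
    (hdim : Module.finrank K E = 2)
    (hsymm : ∀ x y : E, B x y = B y x)
    (hpos : ∀ x : E, x ≠ 0 → 0 < B x x)
    (i : E) (hi : B i i = 1)
    (m : K × E × K) (hm : cyc B m m ≠ 0)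
    (hmp : cyc B m ((0 : K), i, (0 : K)) = 0)
    (hzero : ∃ u : E, cyc B m (qc B u) = 0) :
    0 < cyc B m m ∧ {u : E | B i u < 0 ∧ cyc B m (qc B u) = 0}.Infinite := by
  obtain ⟨u, hu⟩ := hzero
  have hN := cyc_self_pos_of_cyc_qc_eq_zero hsymm hpos hm hu
  refine ⟨hN, ?_⟩
  obtain ⟨a, b, c⟩ := m
  have hbi : B b i = 0 := by simpa [cyc] using hmp
  rcases eq_or_ne a 0 with rfl | ha
  · have hb : B b b ≠ 0 := by simpa [cyc_self] using hN.ne'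
    refine (infinite_halfPlane_inter_line hsymm hi hb hbi (-c)).mono fun u hu => ⟨hu.1, ?_⟩
    rw [cyc_qc]
    linear_combination -2 * hu.2
  · obtain ⟨j, hij, hj⟩ := exists_orthogonal_unit heuc hpos (by omega) i
    have hiw : B i ((-(2 * a)⁻¹) • b) = 0 := by simp [hsymm i b, hbi]
    refine (infinite_halfPlane_inter_circle heuc hsymm hi hij hj hiw
      (div_pos hN (by positivity))).mono
      fun u hu => ⟨hu.1, (cyc_qc_eq_zero_iff hsymm ha u).2 hu.2⟩
end

section
/- For any three pairwise distinct points u, v, w ∈ E, the cycles q(u), q(v), q(w) are linearly independent in F. -/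
/-!
A relation `∑ gᵢ q(xᵢ) = 0` holds componentwise: `∑ gᵢ = 0`, `∑ gᵢ xᵢ = 0` and
`∑ gᵢ B(xᵢ, xᵢ) = 0`. Expanding `B(xᵢ - p, xᵢ - p)` then gives `∑ gᵢ B(xᵢ - p, xᵢ - p) = 0`
for every `p ∈ E`. Taking `p = u, v, w` yields a linear system for the coefficients whose
matrix has zero diagonal and the squared distances `B(u - v, u - v)`, … off the diagonal;
these are nonzero by positivity, so the determinant `2αβγ` is nonzero.
-/

variable {K : Type*} [Field K] [LinearOrder K] [IsStrictOrderedRing K]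
variable {E : Type*} [AddCommGroup E] [Module K E]

theorem eq_zero_of_zero_diagonal_system {R : Type*} [CommRing R] [NoZeroDivisors R]
    [NeZero (2 : R)] {a b c α β γ : R} (hα : α ≠ 0) (hβ : β ≠ 0) (hγ : γ ≠ 0)
    (h₁ : b * α + c * β = 0) (h₂ : a * α + c * γ = 0) (h₃ : a * β + b * γ = 0) :
    a = 0 ∧ b = 0 ∧ c = 0 := by
  have hc : c = 0 := by
    have : 2 * (β * γ) * c = 0 := by linear_combination γ * h₁ + β * h₂ - α * h₃
    simpa [two_ne_zero, hβ, hγ] using this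
  subst hc
  refine ⟨?_, ?_, rfl⟩
  · simpa [hα] using h₂
  · simpa [hα] using h₁

theorem sum_mul_apply_sub_sub_eq_zero_of_sum_smul_qc_eq_zero
    {ι : Type*} [Fintype ι] (B : LinearMap.BilinForm K E) (g : ι → K) (x : ι → E)
    (h : ∑ i, g i • qc B (x i) = 0) (p : E) :
    ∑ i, g i * B (x i - p) (x i - p) = 0 := by
  have hsum : ∑ i, g i = 0 := by simpa [qc, Prod.fst_sum] using congrArg Prod.fst h
  have hcenter : ∑ i, g i • x i = 0 := by
    have : (-2 : K) • ∑ i, g i • x i = 0 := by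
      simpa [qc, Prod.snd_sum, Prod.fst_sum, Finset.smul_sum, smul_comm (g _)] using
        congrArg (·.2.1) h
    simpa using this
  have hnorm : ∑ i, g i * B (x i) (x i) = 0 := by
    simpa [qc, Prod.snd_sum] using congrArg (·.2.2) h
  have hleft : ∑ i, g i * B (x i) p = 0 := by
    simpa [map_sum, Finset.sum_apply] using congrArg (B · p) hcenter
  have hright : ∑ i, g i * B p (x i) = 0 := by
    simpa [map_sum] using congrArg (B p) hcenter
  calc ∑ i, g i * B (x i - p) (x i - p)
      = ∑ i, g i * B (x i) (x i) - ∑ i, g i * B (x i) p - ∑ i, g i * B p (x i)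
          + (∑ i, g i) * B p p := by
        simp only [map_sub, LinearMap.sub_apply, Finset.sum_mul, ← Finset.sum_sub_distrib,
          ← Finset.sum_add_distrib]
        exact Finset.sum_congr rfl fun i _ => by ring
    _ = 0 := by rw [hsum, hnorm, hleft, hright]; ring

theorem qc_linearIndependent_general
    (B : LinearMap.BilinForm K E)
    (hpos : ∀ x : E, x ≠ 0 → 0 < B x x)
    (u v w : E) (huv : u ≠ v) (huw : u ≠ w) (hvw : v ≠ w) :
    LinearIndependent K ![qc B u, qc B v, qc B w] := by
  rw [Fintype.linearIndependent_iff]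
  intro g hg
  have key := sum_mul_apply_sub_sub_eq_zero_of_sum_smul_qc_eq_zero B g ![u, v, w]
    (by simpa [Fin.sum_univ_three] using hg)
  have hflip : ∀ x y : E, B (x - y) (x - y) = B (y - x) (y - x) := fun x y => by
    rw [← neg_sub y x, LinearMap.map_neg₂, map_neg, neg_neg]
  have hne : ∀ x y : E, x ≠ y → B (x - y) (x - y) ≠ 0 := fun x y hxy =>
    (hpos _ (sub_ne_zero.mpr hxy)).ne'
  have eu := key u
  have ev := key v
  have ew := key w
  simp only [Fin.sum_univ_three, Matrix.cons_val, sub_self, map_zero,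
    mul_zero, zero_add, add_zero] at eu ev ew
  rw [hflip v u, hflip w u] at eu
  rw [hflip w v] at ev
  obtain ⟨ha, hb, hc⟩ :=
    eq_zero_of_zero_diagonal_system (hne u v huv) (hne u w huw) (hne v w hvw) eu ev ew
  intro i
  fin_cases i <;> assumption

/-- For pairwise distinct `u, v, w ∈ E`, the cycles `q(u), q(v), q(w)` are linearly
independent in `F`. -/
theorem qc_linearIndependent
    (B : LinearMap.BilinForm K E)
    (heuc : ∀ x : K, 0 ≤ x → ∃ y : K, y * y = x)
    (hdim : Module.finrank K E = 2)
    (hsymm : ∀ x y : E, B x y = B y x)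
    (hpos : ∀ x : E, x ≠ 0 → 0 < B x x)
    (u v w : E) (huv : u ≠ v) (huw : u ≠ w) (hvw : v ≠ w) :
    LinearIndependent K ![qc B u, qc B v, qc B w] :=
  qc_linearIndependent_general B hpos u v w huv huw hvw
end

section
/- For any two distinct points u, v ∈ H, the Gram matrix of the cycle pairing on the triple (p, q(u), q(v)), namely the 3×3 matrix with entries ⟨p,p⟩, ⟨p,q(u)⟩, ⟨p,q(v)⟩, ⟨q(u),p⟩, ⟨q(u),q(u)⟩, ⟨q(u),q(v)⟩, ⟨q(v),p⟩, ⟨q(v),q(u)⟩, ⟨q(v),q(v)⟩, has strictly negative determinant; in particular the cycle pairing restricted to the span of p, q(u), q(v) is nondegenerate. -/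
/-
Since `⟨p, p⟩ = B(i, i) = 1` and every `q(u)` is isotropic, the Gram matrix has the shape
`[[1, a, b], [a, 0, c], [b, c, 0]]` with `a = −2 B(i, u) > 0`, `b = −2 B(i, v) > 0` on `H` and
`c = ⟨q(u), q(v)⟩ = −2 B(u − v, u − v) < 0`; its determinant `c (2ab − c)` is therefore negative.
A form with invertible Gram matrix on a family is nondegenerate on its span.
-/

variable {K : Type*} [Field K] [LinearOrder K] [IsStrictOrderedRing K]
variable {E : Type*} [AddCommGroup E] [Module K E]

/- The coefficients of a vector of the span orthogonal to the family form a vector in the left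
kernel of the Gram matrix. -/
theorem LinearMap.BilinForm.eq_zero_of_mem_span_of_det_ne_zero {R M ι : Type*} [CommRing R]
    [NoZeroDivisors R] [AddCommGroup M] [Module R M] [Fintype ι] [DecidableEq ι]
    (β : LinearMap.BilinForm R M) (w : ι → M)
    (hdet : (Matrix.of fun j k => β (w j) (w k)).det ≠ 0) {f : M}
    (hf : f ∈ Submodule.span R (Set.range w)) (hfw : ∀ k, β f (w k) = 0) : f = 0 := by
  obtain ⟨c, rfl⟩ := (Submodule.mem_span_range_iff_exists_fun R).mp hf
  have hc : c = 0 := by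
    refine Matrix.eq_zero_of_vecMul_eq_zero hdet (funext fun k => ?_)
    simpa [Matrix.vecMul, dotProduct, LinearMap.sum_apply] using hfw k
  simp [hc]

theorem Matrix.det_fin_three_of_one_zero_zero {R : Type*} [CommRing R] (a b c : R) :
    !![1, a, b; a, 0, c; b, c, 0].det = c * (2 * a * b - c) := by
  simp only [Matrix.det_fin_three, Matrix.of_apply, Matrix.cons_val', Matrix.cons_val_zero,
    Matrix.cons_val_one, Matrix.cons_val, Matrix.cons_val_fin_one]
  ring

section Cycles

omit [LinearOrder K] [IsStrictOrderedRing K]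

variable (B : LinearMap.BilinForm K E)

def cycForm : LinearMap.BilinForm K (K × E × K) :=
  LinearMap.mk₂ K (cyc B)
    (fun f f' g => by
      simp only [cyc, Prod.fst_add, Prod.snd_add, map_add, LinearMap.add_apply]; ring)
    (fun x f g => by
      simp only [cyc, Prod.smul_fst, Prod.smul_snd, map_smul, LinearMap.smul_apply, smul_eq_mul]
      ring)
    (fun f g g' => by simp only [cyc, Prod.fst_add, Prod.snd_add, map_add]; ring)
    (fun x f g => by simp only [cyc, Prod.smul_fst, Prod.smul_snd, map_smul, smul_eq_mul]; ring)

@[simp]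
theorem cyc_vector_vector (x y : E) : cyc B (0, x, 0) (0, y, 0) = B x y := by
  simp [cyc]

@[simp]
theorem cyc_vector_qc (x u : E) : cyc B (0, x, 0) (qc B u) = -2 * B x u := by
  simp [cyc, qc]

@[simp]
theorem cyc_qc_vector (u x : E) : cyc B (qc B u) (0, x, 0) = -2 * B u x := by
  simp [cyc, qc]

@[simp]
theorem cyc_qc_self (u : E) : cyc B (qc B u) (qc B u) = 0 := by
  simp only [cyc, qc, map_smul, LinearMap.smul_apply, smul_eq_mul]
  ring

theorem cyc_qc_qc (hsymm : ∀ x y : E, B x y = B y x) (u v : E) :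
    cyc B (qc B u) (qc B v) = -2 * B (u - v) (u - v) := by
  simp only [cyc, qc, map_sub, map_smul, LinearMap.sub_apply, LinearMap.smul_apply, smul_eq_mul]
  rw [hsymm v u]
  ring

end Cycles

open Matrix in
theorem gram_det_neg_general
    (B : LinearMap.BilinForm K E)
    (hsymm : ∀ x y : E, B x y = B y x)
    (hpos : ∀ x : E, x ≠ 0 → 0 < B x x)
    (i : E) (hi : B i i = 1)
    (u v : E) (hu : B i u < 0) (hv : B i v < 0) (huv : u ≠ v) :
    (!![cyc B ((0 : K), i, (0 : K)) ((0 : K), i, (0 : K)),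
        cyc B ((0 : K), i, (0 : K)) (qc B u),
        cyc B ((0 : K), i, (0 : K)) (qc B v);
        cyc B (qc B u) ((0 : K), i, (0 : K)),
        cyc B (qc B u) (qc B u),
        cyc B (qc B u) (qc B v);
        cyc B (qc B v) ((0 : K), i, (0 : K)),
        cyc B (qc B v) (qc B u),
        cyc B (qc B v) (qc B v)]).det < 0 ∧
    ∀ f ∈ Submodule.span K {((0 : K), i, (0 : K)), qc B u, qc B v},
      (∀ g ∈ Submodule.span K {((0 : K), i, (0 : K)), qc B u, qc B v},
        cyc B f g = 0) → f = 0 := by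
  set G := !![cyc B ((0 : K), i, (0 : K)) ((0 : K), i, (0 : K)),
        cyc B ((0 : K), i, (0 : K)) (qc B u),
        cyc B ((0 : K), i, (0 : K)) (qc B v);
        cyc B (qc B u) ((0 : K), i, (0 : K)),
        cyc B (qc B u) (qc B u),
        cyc B (qc B u) (qc B v);
        cyc B (qc B v) ((0 : K), i, (0 : K)),
        cyc B (qc B v) (qc B u),
        cyc B (qc B v) (qc B v)] with hG
  have hd : 0 < B (u - v) (u - v) := hpos _ (sub_ne_zero.mpr huv)
  have hdvu : B (v - u) (v - u) = B (u - v) (u - v) := by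
    rw [← neg_sub u v, map_neg, map_neg, LinearMap.neg_apply, neg_neg]
  have hdet : G.det < 0 := by
    rw [hG, cyc_vector_vector, cyc_vector_qc, cyc_vector_qc, cyc_qc_vector, cyc_qc_vector,
      cyc_qc_self, cyc_qc_self, cyc_qc_qc B hsymm, cyc_qc_qc B hsymm, hdvu, hi, hsymm u i,
      hsymm v i, det_fin_three_of_one_zero_zero]
    exact mul_neg_of_neg_of_pos (by linarith)
      (by nlinarith [mul_pos (neg_pos.mpr hu) (neg_pos.mpr hv)])
  refine ⟨hdet, fun f hf hfw => ?_⟩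
  set w : Fin 3 → K × E × K := ![(0, i, 0), qc B u, qc B v]
  have hgram : of (fun j k => cycForm B (w j) (w k)) = G := by
    ext j k
    fin_cases j <;> fin_cases k <;> rfl
  refine (cycForm B).eq_zero_of_mem_span_of_det_ne_zero w (hgram ▸ hdet.ne) ?_ fun k => ?_
  · rwa [range_cons, range_cons_cons_empty, Set.singleton_union]
  · exact hfw _ (Submodule.subset_span (by fin_cases k <;> simp [w]))

open Matrix in
/-- The Gram matrix of the cycle pairing on `(p, q(u), q(v))` for distinct
`u, v ∈ H` has strictly negative determinant; in particular the cycle pairing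
restricted to the span of `p, q(u), q(v)` is nondegenerate. -/
theorem gram_det_neg
    (B : LinearMap.BilinForm K E)
    (heuc : ∀ x : K, 0 ≤ x → ∃ y : K, y * y = x)
    (hdim : Module.finrank K E = 2)
    (hsymm : ∀ x y : E, B x y = B y x)
    (hpos : ∀ x : E, x ≠ 0 → 0 < B x x)
    (i : E) (hi : B i i = 1)
    (u v : E) (hu : B i u < 0) (hv : B i v < 0) (huv : u ≠ v) :
    (!![cyc B ((0 : K), i, (0 : K)) ((0 : K), i, (0 : K)),
        cyc B ((0 : K), i, (0 : K)) (qc B u),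
        cyc B ((0 : K), i, (0 : K)) (qc B v);
        cyc B (qc B u) ((0 : K), i, (0 : K)),
        cyc B (qc B u) (qc B u),
        cyc B (qc B u) (qc B v);
        cyc B (qc B v) ((0 : K), i, (0 : K)),
        cyc B (qc B v) (qc B u),
        cyc B (qc B v) (qc B v)]).det < 0 ∧
    ∀ f ∈ Submodule.span K {((0 : K), i, (0 : K)), qc B u, qc B v},
      (∀ g ∈ Submodule.span K {((0 : K), i, (0 : K)), qc B u, qc B v},
        cyc B f g = 0) → f = 0 :=
  gram_det_neg_general B hsymm hpos i hi u v hu hv huv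
end

section
/- Let A, B, C be pairwise distinct positive elements of K, and set u = −2A·i, v = −2B·i, w = −2C·i (these are points of H). If x, y, z ∈ K satisfy p = x·q(u) + y·q(v) + z·q(w), then x·z > 0 if and only if either A < B < C or C < B < A. -/
/-!
Comparing the three coordinates of `p = x q(u) + y q(v) + z q(w)` for points `s • i` of the line
through `i` gives a Vandermonde system in `(x, y, z)`. Cramer's rule for it yields, with
`s = −2a`, `t = −2b`, `r = −2c`, the identity `16 x z (a−b)(b−c)(a−c)² = (a+b)(b+c)`, whose right
side is positive. So `x z` has the sign of `(a−b)(b−c)`, which is positive exactly when `b` lies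
strictly between `a` and `c`.
-/

variable {K : Type*} [Field K] [LinearOrder K] [IsStrictOrderedRing K]
variable {E : Type*} [AddCommGroup E] [Module K E]

section

variable {k : Type*} [Field k] {V : Type*} [AddCommGroup V] [Module k V]

lemma qc_smul (B : LinearMap.BilinForm k V) (t : k) (u : V) :
    qc B (t • u) = (1, (-2 * t) • u, t ^ 2 * B u u) := by
  simp only [qc, smul_smul, map_smul, LinearMap.smul_apply, smul_eq_mul]
  ring_nf

lemma coeffs_of_eq_sum_qc_smul {B : LinearMap.BilinForm k V} {i : V} (hi : B i i ≠ 0)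
    {s t r x y z : k}
    (h : ((0 : k), i, (0 : k)) = x • qc B (s • i) + y • qc B (t • i) + z • qc B (r • i)) :
    x + y + z = 0 ∧ -2 * (x * s + y * t + z * r) = 1 ∧ x * s ^ 2 + y * t ^ 2 + z * r ^ 2 = 0 := by
  simp only [qc_smul, Prod.smul_mk, Prod.mk_add_mk, Prod.mk.injEq, smul_eq_mul, smul_smul,
    ← add_smul] at h
  obtain ⟨h₁, h₂, h₃⟩ := h
  have hi₀ : i ≠ 0 := fun h0 => hi (by simp [h0])
  refine ⟨by linear_combination -h₁, ?_, ?_⟩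
  · have : (x * (-2 * s) + y * (-2 * t) + z * (-2 * r) - 1) • i = 0 := by
      rw [sub_smul, one_smul, ← h₂, sub_self]
    linear_combination sub_eq_zero.mp ((smul_eq_zero.mp this).resolve_right hi₀)
  · refine (mul_eq_zero.mp ?_).resolve_right hi
    linear_combination -h₃

end

lemma mul_mul_vandermonde_of_linear_system {R : Type*} [CommRing R] {s t r x y z m : R}
    (h₀ : x + y + z = 0) (h₁ : x * s + y * t + z * r = m)
    (h₂ : x * s ^ 2 + y * t ^ 2 + z * r ^ 2 = 0) :
    x * z * ((s - t) * (t - r) * (s - r) ^ 2) = m ^ 2 * ((s + t) * (t + r)) := by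
  have hx : x * ((t - s) * (r - s)) = -m * (t + r) := by
    linear_combination (t * r) * h₀ - (t + r) * h₁ + h₂
  have hz : z * ((r - s) * (r - t)) = -m * (s + t) := by
    linear_combination (s * t) * h₀ - (s + t) * h₁ + h₂
  linear_combination (z * ((r - s) * (r - t))) * hx + (-m * (t + r)) * hz

section

variable {R : Type*} [CommRing R] [LinearOrder R] [IsStrictOrderedRing R]

lemma sub_mul_sub_pos_iff_between {a b c : R} :
    0 < (a - b) * (b - c) ↔ (a < b ∧ b < c) ∨ (c < b ∧ b < a) := by
  rw [mul_pos_iff, sub_pos, sub_pos, sub_neg, sub_neg, or_comm, and_comm (a := b < a)]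

lemma pos_iff_between_of_mul_eq {a b c w N : R} (hN : 0 < N)
    (h : w * ((a - b) * (b - c) * (a - c) ^ 2) = N) :
    0 < w ↔ (a < b ∧ b < c) ∨ (c < b ∧ b < a) := by
  have hprod : 0 < w * ((a - b) * (b - c) * (a - c) ^ 2) := h ▸ hN
  have hac : a - c ≠ 0 := fun h0 => by simp [h0] at hprod
  have hsq : 0 < (a - c) ^ 2 := sq_pos_of_ne_zero hac
  rw [pos_iff_pos_of_mul_pos hprod, mul_pos_iff_of_pos_right hsq, sub_mul_sub_pos_iff_between]

end

theorem special_line_betweenness_general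
    (B : LinearMap.BilinForm K E)
    (i : E) (hi : B i i = 1)
    (a b c : K) (ha : 0 < a) (hb : 0 < b) (hc : 0 < c)
    (x y z : K)
    (hrel : ((0 : K), i, (0 : K))
        = x • qc B ((-2 * a) • i) + y • qc B ((-2 * b) • i) + z • qc B ((-2 * c) • i)) :
    0 < x * z ↔ (a < b ∧ b < c) ∨ (c < b ∧ b < a) := by
  obtain ⟨h₀, h₁, h₂⟩ := coeffs_of_eq_sum_qc_smul (hi ▸ one_ne_zero) hrel
  have key := mul_mul_vandermonde_of_linear_system (m := -1 / 2) h₀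
    (by linear_combination (-1 / 2 : K) * h₁) h₂
  refine pos_iff_between_of_mul_eq (N := (a + b) * (b + c) / 16) (by positivity) ?_
  linear_combination key / 16

/-- On the special line `{−2t·i : t > 0}`, the sign condition `x·z > 0` in a relation
`p = x·q(u) + y·q(v) + z·q(w)` characterizes natural betweenness. -/
theorem special_line_betweenness
    (B : LinearMap.BilinForm K E)
    (heuc : ∀ x : K, 0 ≤ x → ∃ y : K, y * y = x)
    (hdim : Module.finrank K E = 2)
    (hsymm : ∀ x y : E, B x y = B y x)
    (hpos : ∀ x : E, x ≠ 0 → 0 < B x x)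
    (i : E) (hi : B i i = 1)
    (a b c : K) (ha : 0 < a) (hb : 0 < b) (hc : 0 < c)
    (hab : a ≠ b) (hac : a ≠ c) (hbc : b ≠ c)
    (x y z : K)
    (hrel : ((0 : K), i, (0 : K))
        = x • qc B ((-2 * a) • i) + y • qc B ((-2 * b) • i) + z • qc B ((-2 * c) • i)) :
    0 < x * z ↔ (a < b ∧ b < c) ∨ (c < b ∧ b < a) :=
  special_line_betweenness_general B i hi a b c ha hb hc x y z hrel
end

section
/- (Proposition 2) Let t = (a, b, c) ∈ F be a cycle with ⟨t, p⟩ = 0 (i.e., B(b, i) = 0) and ⟨t, t⟩ = B(b,b) − 4ac = 1. Then for every u ∈ H: B(2a·u + b, 2a·u + b) > 0, and there exist λ ∈ K with λ > 0 and v ∈ H such that q(u) − 2⟨q(u), t⟩·t = λ·q(v). -/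
variable {K : Type*} [Field K] [LinearOrder K] [IsStrictOrderedRing K]
variable {E : Type*} [AddCommGroup E] [Module K E]

/-!
Write `t = (a, b, c)`, `s = ⟨q(u), t⟩` and `w = 2a·u + b`. Expanding with `B(b,b) − 4ac = 1`
gives `λ := B(w, w) = 1 − 2as`, and whenever `λ ≠ 0` a direct computation gives
`q(u) − 2s·t = λ·q(v)` with `v = λ⁻¹(u + s·b)`. Since `B(i, b) = 0`, `B(i, w) = 2a·B(i, u)`, so
`w = 0` would force `2a = 0` and then `b = 0`, contradicting `⟨t, t⟩ = 1`. Hence `λ > 0` by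
positive definiteness, and `B(i, v) = λ⁻¹·B(i, u) < 0`.
-/

section Algebra

-- The algebra holds over any field, so the ordered `K` and its `E` are shadowed here.
variable {K : Type*} [Field K] {E : Type*} [AddCommGroup E] [Module K E]
variable {B : LinearMap.BilinForm K E} {a c : K} {b : E}

def cycReflect (B : LinearMap.BilinForm K E) (t x : K × E × K) : K × E × K :=
  x - (2 * cyc B x t) • t

theorem cyc_qc_left (u : E) :
    cyc B (qc B u) (a, b, c) = -2 * B u b - 2 * c - 2 * a * B u u := by
  simp [cyc, qc]

theorem cyc_self_s12 : cyc B (a, b, c) (a, b, c) = B b b - 4 * a * c := by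
  simp only [cyc]
  ring

theorem apply_smul_add_self_eq (hsymm : ∀ x y : E, B x y = B y x)
    (htt : cyc B (a, b, c) (a, b, c) = 1) (u : E) :
    B ((2 * a) • u + b) ((2 * a) • u + b) = 1 - 2 * a * cyc B (qc B u) (a, b, c) := by
  rw [cyc_self_s12] at htt
  rw [cyc_qc_left]
  simp only [map_add, map_smul, LinearMap.add_apply, LinearMap.smul_apply, smul_eq_mul, hsymm b u]
  linear_combination htt

theorem cycReflect_qc (hsymm : ∀ x y : E, B x y = B y x)
    (htt : cyc B (a, b, c) (a, b, c) = 1) (u : E)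
    (hlam : 1 - 2 * a * cyc B (qc B u) (a, b, c) ≠ 0) :
    cycReflect B (a, b, c) (qc B u) =
      (1 - 2 * a * cyc B (qc B u) (a, b, c)) •
        qc B ((1 - 2 * a * cyc B (qc B u) (a, b, c))⁻¹ • (u + cyc B (qc B u) (a, b, c) • b)) := by
  set s := cyc B (qc B u) (a, b, c) with hs
  set lam := 1 - 2 * a * s
  rw [cycReflect, ← hs]
  rw [cyc_qc_left] at hs
  rw [cyc_self_s12] at htt
  refine Prod.ext ?_ (Prod.ext ?_ ?_)
  · simp only [qc, Prod.fst_sub, Prod.smul_fst, smul_eq_mul]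
    ring
  · simp only [qc, Prod.snd_sub, Prod.fst_sub, Prod.smul_snd, Prod.smul_fst, smul_comm lam (-2 : K),
      smul_smul lam, mul_inv_cancel₀ hlam, one_smul]
    module
  · simp only [qc, Prod.snd_sub, Prod.smul_snd, smul_eq_mul, map_smul, map_add,
      LinearMap.smul_apply, LinearMap.add_apply, hsymm b u]
    field_simp
    linear_combination -s ^ 2 * htt - s * hs

theorem apply_eq_zero_of_cyc_eq_zero {i : E} (hsymm : ∀ x y : E, B x y = B y x)
    (htp : cyc B (a, b, c) ((0 : K), i, (0 : K)) = 0) : B i b = 0 := by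
  simpa [cyc, hsymm b i] using htp

theorem smul_add_ne_zero {i u : E} (hib : B i b = 0) (htt : cyc B (a, b, c) (a, b, c) = 1)
    (hu : B i u ≠ 0) : (2 * a) • u + b ≠ 0 := by
  intro h
  have h2a : 2 * a = 0 := by
    simpa [hu, hib] using congrArg (B i) h
  have hb : b = 0 := by simpa [h2a] using h
  rw [cyc_self_s12, hb, map_zero] at htt
  exact zero_ne_one (α := K) (by linear_combination htt + 2 * c * h2a)

end Algebra

theorem prop2_reflection_proper_general
    (B : LinearMap.BilinForm K E)
    (hsymm : ∀ x y : E, B x y = B y x)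
    (hpos : ∀ x : E, x ≠ 0 → 0 < B x x)
    (i : E)
    (a : K) (b : E) (c : K)
    (htp : cyc B (a, b, c) ((0 : K), i, (0 : K)) = 0)
    (htt : cyc B (a, b, c) (a, b, c) = 1) :
    ∀ u : E, B i u < 0 →
      0 < B ((2 * a) • u + b) ((2 * a) • u + b) ∧
      ∃ lam : K, 0 < lam ∧ ∃ v : E, B i v < 0 ∧
        qc B u - (2 * cyc B (qc B u) (a, b, c)) • ((a, b, c) : K × E × K) = lam • qc B v := by
  intro u hu
  have hib := apply_eq_zero_of_cyc_eq_zero hsymm htp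
  have hw := hpos _ (smul_add_ne_zero hib htt hu.ne)
  rw [apply_smul_add_self_eq hsymm htt u] at hw ⊢
  refine ⟨hw, _, hw, _, ?_, cycReflect_qc hsymm htt u hw.ne'⟩
  simpa [hib] using mul_neg_of_pos_of_neg (inv_pos.mpr hw) hu

/-- Proposition 2: the reflection along a unit-norm cycle orthogonal to `p` is a proper
transformation. -/
theorem prop2_reflection_proper
    (B : LinearMap.BilinForm K E)
    (heuc : ∀ x : K, 0 ≤ x → ∃ y : K, y * y = x)
    (hdim : Module.finrank K E = 2)
    (hsymm : ∀ x y : E, B x y = B y x)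
    (hpos : ∀ x : E, x ≠ 0 → 0 < B x x)
    (i : E) (hi : B i i = 1)
    (a : K) (b : E) (c : K)
    (htp : cyc B (a, b, c) ((0 : K), i, (0 : K)) = 0)
    (htt : cyc B (a, b, c) (a, b, c) = 1) :
    ∀ u : E, B i u < 0 →
      0 < B ((2 * a) • u + b) ((2 * a) • u + b) ∧
      ∃ lam : K, 0 < lam ∧ ∃ v : E, B i v < 0 ∧
        qc B u - (2 * cyc B (qc B u) (a, b, c)) • ((a, b, c) : K × E × K) = lam • qc B v :=
  prop2_reflection_proper_general B hsymm hpos i a b c htp htt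
end

section
/- (Proposition 4(b)) Let u ∈ H and let ℓ be a cycle with ⟨ℓ, ℓ⟩ > 0, ⟨ℓ, p⟩ = 0 and ⟨ℓ, q(u)⟩ = 0. Then there exists a cycle n ∈ F with ⟨n, n⟩ > 0 that is orthogonal to p, q(u) and ℓ (⟨n,p⟩ = ⟨n,q(u)⟩ = ⟨n,ℓ⟩ = 0), every cycle orthogonal to all of p, q(u) and ℓ is a scalar multiple of n, and for every v ∈ H with v ≠ u and ⟨ℓ, q(v)⟩ = 0 one has ⟨n, q(v)⟩ ≠ 0. -/
variable {K : Type*} [Field K] [LinearOrder K] [IsStrictOrderedRing K]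
variable {E : Type*} [AddCommGroup E] [Module K E]

/-!
Complete `i` to an orthonormal basis `i, j` of `E`. The cycles orthogonal to `p` and to `q(u)`
form the plane of cycles `(s, y j, -y B(j,u) - s B(u,u))`, on which the cycle pairing is the
binary form `y y' + 2 B(j,u) (s y' + s' y) + 4 B(u,u) s s'`. Its determinant is
`4 (B(u,u) - B(j,u)²) = 4 B(i,u)²`, positive for `u ∈ H`, so the form is positive definite.
The cycle `ℓ` lies in this plane, and `n` is `ℓ` turned by a right angle for this form: then
`⟨n, n⟩ = 4 B(i,u)² ⟨ℓ, ℓ⟩` and `n` spans the orthogonal of `ℓ` in the plane. Since `ℓ` and `n`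
span the plane, `q(v)` orthogonal to both forces `B(j,v) = B(j,u)` and `B(v,v) = B(u,u)`, hence
`B(i,v)² = B(i,u)²`, and `v = u` once both lie in `H`.
-/

namespace LinearMap.BilinForm

theorem exists_orthogonal_apply_self_eq_one (B : LinearMap.BilinForm K E)
    (heuc : ∀ x : K, 0 ≤ x → ∃ y : K, y * y = x) (hdim : 1 < Module.finrank K E)
    (hpos : ∀ x : E, x ≠ 0 → 0 < B x x) {i : E} (hi : B i i = 1) :
    ∃ j : E, B i j = 0 ∧ B j j = 1 := by
  have hi0 : i ≠ 0 := by rintro rfl; simp at hi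
  obtain ⟨w, hw⟩ := exists_linearIndependent_pair_of_one_lt_finrank hdim hi0
  set w' := w - B i w • i
  have hw' : w' ≠ 0 := fun h ↦ by
    simpa using LinearIndependent.pair_iff.1 hw (-B i w) 1 (by rw [← h]; module)
  obtain ⟨s, hs⟩ := heuc _ (hpos w' hw').le
  have hs0 : s ≠ 0 := by rintro rfl; exact (hpos w' hw').ne' (by simpa using hs.symm)
  refine ⟨s⁻¹ • w', by simp [w', hi], ?_⟩
  simp only [map_smul, LinearMap.smul_apply, smul_eq_mul, ← hs]
  field_simp

theorem eq_apply_smul_add_apply_smul {𝕜 V : Type*} [Field 𝕜] [AddCommGroup V] [Module 𝕜 V]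
    (B : LinearMap.BilinForm 𝕜 V)
    (hdim : Module.finrank 𝕜 V = 2) {i j : V} (hi : B i i = 1) (hj : B j j = 1)
    (hij : B i j = 0) (hji : B j i = 0) (x : V) :
    x = B i x • i + B j x • j := by
  have hli : LinearIndependent 𝕜 ![i, j] := by
    refine LinearIndependent.pair_iff.2 fun s t hst ↦ ⟨?_, ?_⟩
    · simpa [hi, hij] using congrArg (B i) hst
    · simpa [hji, hj] using congrArg (B j) hst
  have hx : x ∈ Submodule.span 𝕜 (Set.range ![i, j]) :=
    hli.span_eq_top_of_card_eq_finrank (by simp [hdim]) ▸ Submodule.mem_top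
  obtain ⟨c, rfl⟩ := (Submodule.mem_span_range_iff_exists_fun 𝕜).1 hx
  simp [Fin.sum_univ_two, hi, hj, hij, hji]

theorem apply_self_eq_sq_add_sq {R M : Type*} [CommRing R] [AddCommGroup M] [Module R M]
    (B : LinearMap.BilinForm R M) {i j : M}
    (hi : B i i = 1) (hj : B j j = 1) (hij : B i j = 0) (hji : B j i = 0)
    {x : M} (hx : x = B i x • i + B j x • j) :
    B x x = B i x ^ 2 + B j x ^ 2 := by
  conv_lhs => rw [hx]
  simp only [map_add, map_smul, LinearMap.add_apply, LinearMap.smul_apply, smul_eq_mul,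
    hi, hj, hij, hji]
  ring

theorem eq_of_apply_eq_of_apply_self_eq (B : LinearMap.BilinForm K E) {i j : E}
    (hi : B i i = 1) (hj : B j j = 1) (hij : B i j = 0) (hji : B j i = 0)
    (hdecomp : ∀ x : E, x = B i x • i + B j x • j) {u v : E} (hu : B i u < 0) (hv : B i v < 0)
    (hjv : B j v = B j u) (hvv : B v v = B u u) : v = u := by
  have hsq : (-B i v) ^ 2 = (-B i u) ^ 2 := by
    rw [B.apply_self_eq_sq_add_sq hi hj hij hji (hdecomp v),
      B.apply_self_eq_sq_add_sq hi hj hij hji (hdecomp u), hjv] at hvv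
    linear_combination hvv
  have hiv : B i v = B i u := by
    simpa using (pow_left_inj₀ (neg_nonneg.2 hv.le) (neg_nonneg.2 hu.le) two_ne_zero).1 hsq
  rw [hdecomp v, hdecomp u, hiv, hjv]

end LinearMap.BilinForm

section Pencil

variable {𝕜 : Type*} [Field 𝕜]

theorem exists_eq_smul_of_mul_sub_mul_eq_zero {x z : 𝕜 × 𝕜} (hx : x ≠ 0)
    (h : x.1 * z.2 - x.2 * z.1 = 0) : ∃ c : 𝕜, z = c • x := by
  by_cases h1 : x.1 = 0
  · have h2 : x.2 ≠ 0 := fun h2 ↦ hx (Prod.ext h1 h2)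
    refine ⟨z.2 / x.2, Prod.ext ?_ ?_⟩
    · have : z.1 = 0 := by simpa [h1, h2] using h
      simp [h1, this]
    · simp [h2]
  · refine ⟨z.1 / x.1, Prod.ext ?_ ?_⟩
    · simp [h1]
    · rw [Prod.smul_snd, smul_eq_mul, div_mul_eq_mul_div, eq_div_iff h1]
      linear_combination h

theorem eq_zero_of_mul_add_mul_eq_zero {x z : 𝕜 × 𝕜} {d₁ d₂ : 𝕜}
    (hdet : x.1 * z.2 - x.2 * z.1 ≠ 0)
    (hx : x.1 * d₁ + x.2 * d₂ = 0) (hz : z.1 * d₁ + z.2 * d₂ = 0) : d₁ = 0 ∧ d₂ = 0 := by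
  have h₁ : (x.1 * z.2 - x.2 * z.1) * d₁ = 0 := by linear_combination z.2 * hx - x.2 * hz
  have h₂ : (x.1 * z.2 - x.2 * z.1) * d₂ = 0 := by linear_combination x.1 * hz - z.1 * hx
  exact ⟨by simpa [hdet] using h₁, by simpa [hdet] using h₂⟩

variable {V : Type*} [AddCommGroup V] [Module 𝕜 V] (B : LinearMap.BilinForm 𝕜 V) (j u : V)

def pencil (x : 𝕜 × 𝕜) : 𝕜 × V × 𝕜 :=
  (x.1, x.2 • j, -(x.2 * B j u) - x.1 * B u u)

def pencilRot (x : 𝕜 × 𝕜) : 𝕜 × 𝕜 :=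
  (x.2 + 2 * B j u * x.1, -2 * (B j u * x.2 + 2 * B u u * x.1))

variable {B j u}

theorem pencil_smul (c : 𝕜) (x : 𝕜 × 𝕜) : pencil B j u (c • x) = c • pencil B j u x := by
  simp only [pencil, Prod.smul_mk, Prod.smul_fst, Prod.smul_snd, smul_eq_mul, smul_smul]
  ring_nf

theorem cyc_pencil_p {i : V} (hji : B j i = 0) (x : 𝕜 × 𝕜) :
    cyc B (pencil B j u x) (0, i, 0) = 0 := by
  simp [cyc, pencil, hji]

theorem cyc_pencil_qc (x : 𝕜 × 𝕜) (v : V) :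
    cyc B (pencil B j u x) (qc B v) = -2 * (x.1 * (B v v - B u u) + x.2 * (B j v - B j u)) := by
  simp only [cyc, pencil, qc, map_smul, LinearMap.smul_apply, smul_eq_mul]
  ring

theorem cyc_pencil_pencil (hj : B j j = 1) (z x : 𝕜 × 𝕜) :
    cyc B (pencil B j u z) (pencil B j u x) =
      (pencilRot B j u x).1 * z.2 - (pencilRot B j u x).2 * z.1 := by
  simp only [cyc, pencil, pencilRot, map_smul, LinearMap.smul_apply, smul_eq_mul, hj]
  ring

theorem cyc_pencil_pencilRot_self (hj : B j j = 1) (x : 𝕜 × 𝕜) :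
    cyc B (pencil B j u (pencilRot B j u x)) (pencil B j u (pencilRot B j u x)) =
      4 * (B u u - B j u ^ 2) * cyc B (pencil B j u x) (pencil B j u x) := by
  simp only [cyc_pencil_pencil hj, pencilRot]
  ring

theorem eq_pencil_of_cyc_eq_zero [NeZero (2 : 𝕜)] {i : V} (hsymm : ∀ x y : V, B x y = B y x)
    (hdecomp : ∀ x : V, x = B i x • i + B j x • j) {f : 𝕜 × V × 𝕜}
    (hfp : cyc B f (0, i, 0) = 0) (hfu : cyc B f (qc B u) = 0) :
    f = pencil B j u (f.1, B j f.2.1) := by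
  have hf : f.2.1 = B j f.2.1 • j := by
    have hi : B i f.2.1 = 0 := by simpa [cyc, hsymm f.2.1 i] using hfp
    conv_lhs => rw [hdecomp f.2.1, hi, zero_smul, zero_add]
  have hf₃ : f.2.2 = -(B j f.2.1 * B j u) - f.1 * B u u := by
    rw [cyc, qc, hf] at hfu
    simp only [map_smul, LinearMap.smul_apply, smul_eq_mul] at hfu
    refine mul_left_cancel₀ (two_ne_zero : (2 : 𝕜) ≠ 0) ?_
    linear_combination -hfu
  rw [pencil, ← hf, ← hf₃]

theorem exists_eq_smul_of_cyc_pencil_eq_zero (hj : B j j = 1) {x z : 𝕜 × 𝕜}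
    (hx : pencilRot B j u x ≠ 0) (h : cyc B (pencil B j u z) (pencil B j u x) = 0) :
    ∃ c : 𝕜, pencil B j u z = c • pencil B j u (pencilRot B j u x) := by
  rw [cyc_pencil_pencil hj] at h
  obtain ⟨c, rfl⟩ := exists_eq_smul_of_mul_sub_mul_eq_zero hx h
  exact ⟨c, pencil_smul c _⟩

theorem apply_eq_of_cyc_pencil_qc_eq_zero [NeZero (2 : 𝕜)] (hj : B j j = 1) {x : 𝕜 × 𝕜}
    (hx : cyc B (pencil B j u x) (pencil B j u x) ≠ 0) {v : V}
    (hxv : cyc B (pencil B j u x) (qc B v) = 0)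
    (hrv : cyc B (pencil B j u (pencilRot B j u x)) (qc B v) = 0) :
    B v v = B u u ∧ B j v = B j u := by
  rw [cyc_pencil_qc] at hxv hrv
  have hdet : x.1 * (pencilRot B j u x).2 - x.2 * (pencilRot B j u x).1 ≠ 0 := by
    rw [cyc_pencil_pencil hj] at hx
    contrapose! hx
    linear_combination -hx
  obtain ⟨hvv, hjv⟩ :=
    eq_zero_of_mul_add_mul_eq_zero hdet (by simpa [two_ne_zero] using hxv)
      (by simpa [two_ne_zero] using hrv)
  exact ⟨sub_eq_zero.1 hvv, sub_eq_zero.1 hjv⟩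

end Pencil

/-- Proposition 4(b): for a point `u` on the line of `ℓ`, there is a positive-norm
cycle `n` orthogonal to `p`, `q(u)` and `ℓ`, unique up to scalar, and `⟨n, q(v)⟩ ≠ 0`
for every other point `v` of the line. -/
theorem prop4b_orthogonal_cycle
    (B : LinearMap.BilinForm K E)
    (heuc : ∀ x : K, 0 ≤ x → ∃ y : K, y * y = x)
    (hdim : Module.finrank K E = 2)
    (hsymm : ∀ x y : E, B x y = B y x)
    (hpos : ∀ x : E, x ≠ 0 → 0 < B x x)
    (i : E) (hi : B i i = 1)
    (u : E) (hu : B i u < 0)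
    (l : K × E × K) (hl : 0 < cyc B l l)
    (hlp : cyc B l ((0 : K), i, (0 : K)) = 0)
    (hlu : cyc B l (qc B u) = 0) :
    ∃ n : K × E × K, 0 < cyc B n n ∧
      cyc B n ((0 : K), i, (0 : K)) = 0 ∧ cyc B n (qc B u) = 0 ∧ cyc B n l = 0 ∧
      (∀ n' : K × E × K, cyc B n' ((0 : K), i, (0 : K)) = 0 →
        cyc B n' (qc B u) = 0 → cyc B n' l = 0 → ∃ c : K, n' = c • n) ∧
      ∀ v : E, B i v < 0 → v ≠ u → cyc B l (qc B v) = 0 → cyc B n (qc B v) ≠ 0 := by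
  obtain ⟨j, hij, hj⟩ := B.exists_orthogonal_apply_self_eq_one heuc (by omega) hpos hi
  have hji : B j i = 0 := by rw [hsymm, hij]
  have hdecomp := B.eq_apply_smul_add_apply_smul hdim hi hj hij hji
  set x₀ : K × K := (l.1, B j l.2.1)
  set n := pencil B j u (pencilRot B j u x₀)
  have hl_eq : l = pencil B j u x₀ := eq_pencil_of_cyc_eq_zero hsymm hdecomp hlp hlu
  have hnn : cyc B n n = 4 * B i u ^ 2 * cyc B l l := by
    rw [cyc_pencil_pencilRot_self hj, ← hl_eq, B.apply_self_eq_sq_add_sq hi hj hij hji (hdecomp u)]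
    ring
  have hn_pos : 0 < cyc B n n := hnn ▸ mul_pos (mul_pos four_pos (sq_pos_of_neg hu)) hl
  have hn0 : pencilRot B j u x₀ ≠ 0 := fun h ↦ by simp [n, h, pencil, cyc] at hn_pos
  refine ⟨n, hn_pos, cyc_pencil_p hji _, by rw [cyc_pencil_qc]; ring, ?_, ?_, ?_⟩
  · rw [hl_eq, cyc_pencil_pencil hj]
    ring
  · intro n' hn'p hn'u hn'l
    have hn' := eq_pencil_of_cyc_eq_zero hsymm hdecomp hn'p hn'u
    rw [hn', hl_eq] at hn'l
    rw [hn']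
    exact exists_eq_smul_of_cyc_pencil_eq_zero hj hn0 hn'l
  · intro v hv hvu hlv hnv
    rw [hl_eq] at hl hlv
    obtain ⟨hvv, hjv⟩ := apply_eq_of_cyc_pencil_qc_eq_zero hj hl.ne' hlv hnv
    exact hvu (B.eq_of_apply_eq_of_apply_self_eq hi hj hij hji hdecomp hu hv hjv hvv)
end

section
/- (Intersection criterion) Let ℓ and m be nonisotropic cycles with ⟨ℓ, p⟩ = 0 and ⟨m, p⟩ = 0 that are not scalar multiples of each other. Then there exists a point w ∈ H with ⟨ℓ, q(w)⟩ = 0 and ⟨m, q(w)⟩ = 0 if and only if the span of ℓ and m is anisotropic, i.e., ⟨x·ℓ + y·m, x·ℓ + y·m⟩ ≠ 0 for all (x, y) ∈ K × K with (x, y) ≠ (0, 0). -/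
variable {K : Type*} [Field K] [LinearOrder K] [IsStrictOrderedRing K]
variable {E : Type*} [AddCommGroup E] [Module K E]

/-!
Pick `j` with `(i, j)` orthonormal. A cycle orthogonal to `p` has the form `ℓ = (A, β j, C)`, and
for `w = s i + t j` one has `⟨ℓ, q(w)⟩ = -2 (A (s² + t²) + β t + C)` and `⟨ℓ, ℓ⟩ = β² - 4 A C`.
If a cycle vanishes at `q(w)` with `s ≠ 0`, then `⟨ℓ, ℓ⟩ = (2 A s)² + (2 A t + β)²`, which is zero
only for `ℓ = 0`; so a common point of `ℓ` and `m` makes their span anisotropic. Conversely, an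
anisotropic binary form has positive Gram determinant, and this is exactly the condition that the
solution `(u, t)` of the linear system `A u + β t + C = 0` for `ℓ` and `m` has `u > t²`, so that
`s = -√(u - t²)` gives the common point.
-/

section Pencil

variable {R : Type*} [CommRing R]

def lineEval (a : R × R × R) (s t : R) : R :=
  a.1 * (s * s + t * t) + a.2.1 * t + a.2.2

def disc (a : R × R × R) : R :=
  discrim a.1 a.2.1 a.2.2

def discPolar (a b : R × R × R) : R :=
  a.2.1 * b.2.1 - 2 * a.1 * b.2.2 - 2 * b.1 * a.2.2

lemma lineEval_smul_add_smul (a b : R × R × R) (x y s t : R) :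
    lineEval (x • a + y • b) s t = x * lineEval a s t + y * lineEval b s t := by
  simp only [lineEval, Prod.fst_add, Prod.snd_add, Prod.smul_fst, Prod.smul_snd, smul_eq_mul]
  ring

lemma disc_smul_add_smul (a b : R × R × R) (x y : R) :
    disc (x • a + y • b) = x * x * disc a + 2 * (x * y) * discPolar a b + y * y * disc b := by
  simp only [disc, discPolar, discrim, Prod.fst_add, Prod.snd_add, Prod.smul_fst, Prod.smul_snd,
    smul_eq_mul]
  ring

lemma disc_eq_of_lineEval_eq_zero {a : R × R × R} {s t : R} (h : lineEval a s t = 0) :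
    disc a = (2 * a.1 * s) ^ 2 + (2 * a.1 * t + a.2.1) ^ 2 := by
  have := discrim_eq_sq_of_quadratic_eq_zero (a := a.1) (b := a.2.1) (c := a.2.2 + a.1 * (s * s))
    (x := t) (by unfold lineEval at h; linear_combination h)
  unfold disc discrim at *
  linear_combination this

end Pencil

lemma eq_zero_of_disc_eq_zero_of_lineEval_eq_zero {a : K × K × K} {s t : K} (hs : s ≠ 0)
    (h : lineEval a s t = 0) (hd : disc a = 0) : a = 0 := by
  rw [disc_eq_of_lineEval_eq_zero h] at hd
  obtain ⟨h₁, h₂⟩ := (add_eq_zero_iff_of_nonneg (sq_nonneg _) (sq_nonneg _)).mp hd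
  have hA : a.1 = 0 := by simpa [hs] using h₁
  have hβ : a.2.1 = 0 := by simpa [hA] using h₂
  have hC : a.2.2 = 0 := by simpa [lineEval, hA, hβ] using h
  exact Prod.ext hA (Prod.ext hβ hC)

lemma disc_smul_add_smul_ne_zero {a b : K × K × K} (hab : LinearIndependent K ![a, b])
    {s t : K} (hs : s ≠ 0) (ha : lineEval a s t = 0) (hb : lineEval b s t = 0)
    {x y : K} (hxy : (x, y) ≠ (0, 0)) : disc (x • a + y • b) ≠ 0 := by
  intro hd
  have hn := eq_zero_of_disc_eq_zero_of_lineEval_eq_zero hs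
    (by rw [lineEval_smul_add_smul, ha, hb, mul_zero, mul_zero, add_zero]) hd
  obtain ⟨rfl, rfl⟩ := LinearIndependent.pair_iff.mp hab x y hn
  exact hxy rfl

lemma sq_lt_mul_of_binary_anisotropic (heuc : ∀ x : K, 0 ≤ x → ∃ y : K, y * y = x) {P Q S : K}
    (h : ∀ x y : K, (x, y) ≠ (0, 0) → x * x * P + 2 * (x * y) * Q + y * y * S ≠ 0) :
    Q * Q < P * S := by
  have hP : P ≠ 0 := by simpa using h 1 0 (by simp)
  by_contra! hle
  obtain ⟨d, hd⟩ := heuc (Q * Q - P * S) (sub_nonneg.mpr hle)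
  -- the form takes the value `P (d² - Q² + P S) = 0` at `(d - Q, P)`
  exact h (d - Q) P (fun hc => hP (congrArg Prod.snd hc)) (by linear_combination P * hd)

lemma exists_lineEval_eq_zero_of_sq_discPolar_lt
    (heuc : ∀ x : K, 0 ≤ x → ∃ y : K, y * y = x) {a b : K × K × K}
    (h : discPolar a b * discPolar a b < disc a * disc b) :
    ∃ s t : K, s < 0 ∧ lineEval a s t = 0 ∧ lineEval b s t = 0 := by
  obtain ⟨A, β, C⟩ := a
  obtain ⟨A', β', C'⟩ := b
  simp only [disc, discPolar, discrim] at h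
  -- Cramer's rule for the linear system in `(s * s + t * t, t)`
  set D := A * β' - A' * β
  set u := (β * C' - β' * C) / D
  set t := (A' * C - A * C') / D
  have hΔ : 0 < (β * C' - β' * C) * D - (A * C' - A' * C) ^ 2 := by nlinarith
  have hD : D ≠ 0 := by
    rintro hD
    rw [hD] at hΔ
    nlinarith [sq_nonneg (A * C' - A' * C)]
  have hut : 0 < u - t * t := by
    have : u - t * t = ((β * C' - β' * C) * D - (A * C' - A' * C) ^ 2) / (D * D) := by
      simp only [u, t]; field_simp; ring
    rw [this]
    exact div_pos hΔ (mul_self_pos.mpr hD)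
  obtain ⟨r, hr⟩ := heuc _ hut.le
  have hr0 : r ≠ 0 := by rintro rfl; linarith
  have hs : (-|r|) * (-|r|) + t * t = u := by rw [neg_mul_neg, abs_mul_abs_self, hr]; ring
  refine ⟨-|r|, t, by simpa using hr0, ?_, ?_⟩ <;>
  · simp only [lineEval, hs, u, t]
    field_simp
    ring

lemma exists_lineEval_eq_zero_iff (heuc : ∀ x : K, 0 ≤ x → ∃ y : K, y * y = x)
    {a b : K × K × K} (hab : LinearIndependent K ![a, b]) :
    (∃ s t : K, s < 0 ∧ lineEval a s t = 0 ∧ lineEval b s t = 0) ↔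
      ∀ x y : K, (x, y) ≠ (0, 0) → disc (x • a + y • b) ≠ 0 :=
  ⟨fun ⟨_, _, hs, ha, hb⟩ _ _ hxy => disc_smul_add_smul_ne_zero hab hs.ne ha hb hxy,
    fun h => exists_lineEval_eq_zero_of_sq_discPolar_lt heuc <|
      sq_lt_mul_of_binary_anisotropic heuc fun x y hxy => by
        simpa only [disc_smul_add_smul] using h x y hxy⟩

section Cycles

variable {F : Type*} [Field F] {V : Type*} [AddCommGroup V] [Module F V]

lemma eq_smul_add_smul_of_ker_eq_span {B : LinearMap.BilinForm F V}
    (hsymm : ∀ x y : V, B x y = B y x) {i j : V} (hi : B i i = 1) (hij : B i j = 0)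
    (hker : ∀ u : V, B i u = 0 → u = B j u • j) (w : V) :
    w = B i w • i + B j w • j := by
  have h := hker (w - B i w • i) (by simp [hi])
  rw [map_sub, map_smul, hsymm j i, hij, smul_zero, sub_zero] at h
  rw [← h]
  abel

def liftCycle (j : V) : F × F × F →ₗ[F] F × V × F :=
  LinearMap.prodMap LinearMap.id (LinearMap.prodMap (LinearMap.toSpanSingleton F V j) LinearMap.id)

lemma liftCycle_apply (j : V) (a : F × F × F) : liftCycle j a = (a.1, a.2.1 • j, a.2.2) := rfl

lemma cyc_liftCycle_self {B : LinearMap.BilinForm F V} {j : V} (hjj : B j j = 1)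
    (a : F × F × F) : cyc B (liftCycle j a) (liftCycle j a) = disc a := by
  simp only [cyc, liftCycle_apply, disc, discrim, map_smul, LinearMap.smul_apply, smul_eq_mul, hjj]
  ring

lemma cyc_liftCycle_qc {B : LinearMap.BilinForm F V} {i j : V} (hi : B i i = 1)
    (hij : B i j = 0) (hji : B j i = 0) (hjj : B j j = 1) (a : F × F × F) (s t : F) :
    cyc B (liftCycle j a) (qc B (s • i + t • j)) = -2 * lineEval a s t := by
  simp only [cyc, qc, liftCycle_apply, lineEval, map_add, map_smul, LinearMap.add_apply,
    LinearMap.smul_apply, smul_eq_mul, hi, hij, hji, hjj]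
  ring

lemma eq_liftCycle_of_cyc_eq_zero {B : LinearMap.BilinForm F V}
    (hsymm : ∀ x y : V, B x y = B y x) {i j : V} (hker : ∀ u : V, B i u = 0 → u = B j u • j)
    {l : F × V × F} (hl : cyc B l (0, i, 0) = 0) :
    l = liftCycle j (l.1, B j l.2.1, l.2.2) := by
  have hli : B i l.2.1 = 0 := by simpa [cyc, hsymm i] using hl
  rw [liftCycle_apply, ← hker _ hli]

end Cycles

lemma exists_unit_spanning_ker (B : LinearMap.BilinForm K E)
    (heuc : ∀ x : K, 0 ≤ x → ∃ y : K, y * y = x) (hdim : Module.finrank K E = 2)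
    (hpos : ∀ x : E, x ≠ 0 → 0 < B x x) {i : E} (hi : B i ≠ 0) :
    ∃ j : E, B i j = 0 ∧ B j j = 1 ∧ ∀ u : E, B i u = 0 → u = B j u • j := by
  have : FiniteDimensional K E := Module.finite_of_finrank_pos (by omega)
  have hker : Module.finrank K (LinearMap.ker (B i)) = 1 := by
    have := Module.Dual.finrank_ker_add_one_of_ne_zero hi
    omega
  obtain ⟨⟨v, hv⟩, hne⟩ :=
    (Module.finrank_pos_iff_exists_ne_zero (R := K) (M := LinearMap.ker (B i))).mp (by omega)
  have hv0 : v ≠ 0 := by simpa using hne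
  obtain ⟨c, hc⟩ := heuc _ (hpos v hv0).le
  have hc0 : c ≠ 0 := by rintro rfl; linarith [hpos v hv0]
  set j := c⁻¹ • v
  have hj : B i j = 0 := by rw [map_smul, LinearMap.mem_ker.mp hv, smul_zero]
  have hjj : B j j = 1 := by
    simp only [j, map_smul, LinearMap.smul_apply, smul_eq_mul, ← hc]
    field_simp
  refine ⟨j, hj, hjj, fun u hu => ?_⟩
  obtain ⟨r, hr⟩ := (finrank_eq_one_iff_of_nonzero' (⟨j, hj⟩ : LinearMap.ker (B i))
    (Subtype.coe_ne_coe.mp (smul_ne_zero (inv_ne_zero hc0) hv0))).mp hker ⟨u, hu⟩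
  have hu : u = r • j := congrArg Subtype.val hr.symm
  rw [hu, map_smul, smul_eq_mul, hjj, mul_one]

theorem intersection_criterion_general
    (B : LinearMap.BilinForm K E)
    (heuc : ∀ x : K, 0 ≤ x → ∃ y : K, y * y = x)
    (hdim : Module.finrank K E = 2)
    (hsymm : ∀ x y : E, B x y = B y x)
    (hpos : ∀ x : E, x ≠ 0 → 0 < B x x)
    (i : E) (hi : B i i = 1)
    (l m : K × E × K)
    (hlp : cyc B l ((0 : K), i, (0 : K)) = 0)
    (hmp : cyc B m ((0 : K), i, (0 : K)) = 0)
    (hnotmul : (∀ c : K, l ≠ c • m) ∧ (∀ c : K, m ≠ c • l)) :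
    (∃ w : E, B i w < 0 ∧ cyc B l (qc B w) = 0 ∧ cyc B m (qc B w) = 0) ↔
      ∀ x y : K, (x, y) ≠ ((0 : K), (0 : K)) →
        cyc B (x • l + y • m) (x • l + y • m) ≠ 0 := by
  obtain ⟨j, hij, hjj, hker⟩ :=
    exists_unit_spanning_ker B heuc hdim hpos (i := i) fun h => by simp [h] at hi
  have hji : B j i = 0 := by rw [hsymm, hij]
  have hcyc_qc := cyc_liftCycle_qc hi hij hji hjj
  obtain ⟨a, rfl⟩ : ∃ a, l = liftCycle j a := ⟨_, eq_liftCycle_of_cyc_eq_zero hsymm hker hlp⟩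
  obtain ⟨b, rfl⟩ : ∃ b, m = liftCycle j b := ⟨_, eq_liftCycle_of_cyc_eq_zero hsymm hker hmp⟩
  have hab : LinearIndependent K ![a, b] :=
    (LinearIndependent.pair_iff' fun h => hnotmul.1 0 (by rw [h, map_zero, zero_smul])).mpr
      fun c h => hnotmul.2 c (by rw [← h, map_smul])
  simp_rw [← map_smul, ← map_add, cyc_liftCycle_self hjj]
  rw [← exists_lineEval_eq_zero_iff heuc hab]
  constructor
  · rintro ⟨w, hw, hl, hm⟩
    rw [eq_smul_add_smul_of_ker_eq_span hsymm hi hij hker w, hcyc_qc] at hl hm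
    exact ⟨B i w, B j w, hw, by simpa using hl, by simpa using hm⟩
  · rintro ⟨s, t, hs, ha, hb⟩
    refine ⟨s • i + t • j, by simpa [hi, hij] using hs, ?_, ?_⟩ <;> simp [hcyc_qc, ha, hb]

/-- Intersection criterion: two distinct lines in `H` intersect iff the span of their
defining cycles is anisotropic. -/
theorem intersection_criterion
    (B : LinearMap.BilinForm K E)
    (heuc : ∀ x : K, 0 ≤ x → ∃ y : K, y * y = x)
    (hdim : Module.finrank K E = 2)
    (hsymm : ∀ x y : E, B x y = B y x)
    (hpos : ∀ x : E, x ≠ 0 → 0 < B x x)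
    (i : E) (hi : B i i = 1)
    (l m : K × E × K) (hl : cyc B l l ≠ 0) (hm : cyc B m m ≠ 0)
    (hlp : cyc B l ((0 : K), i, (0 : K)) = 0)
    (hmp : cyc B m ((0 : K), i, (0 : K)) = 0)
    (hnotmul : (∀ c : K, l ≠ c • m) ∧ (∀ c : K, m ≠ c • l)) :
    (∃ w : E, B i w < 0 ∧ cyc B l (qc B w) = 0 ∧ cyc B m (qc B w) = 0) ↔
      ∀ x y : K, (x, y) ≠ ((0 : K), (0 : K)) →
        cyc B (x • l + y • m) (x • l + y • m) ≠ 0 :=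
  intersection_criterion_general B heuc hdim hsymm hpos i hi l m hlp hmp hnotmul
end
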